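/- arXiv:2307.13613 — 5 statements merged into one kernel-verified Lean document; each statement's English description precedes it below -/
import Mathlib

section
/- Let A ∈ F_q^{n×m} be a matrix of rank 2, with n ≥ 2. Then there exist at least three distinct matrices M ∈ F_q^{n×m} with rank(M) = 1 and rank(A − M) = 1. -/
/-!
Write `A = u ⊗ α + v ⊗ β` along a basis `u, v` of its column space. As `A` has rank two it is not
a single outer product, which forces `u, v, α, β ≠ 0` and `u ⊗ α ≠ v ⊗ β`. The three rank-one
summands are then `u ⊗ α`, `v ⊗ β` and `u ⊗ (α + β)`, the last with complement `(v - u) ⊗ β`.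
-/

namespace Matrix

theorem vecMulVec_eq_zero_iff {R m n : Type*} [MulZeroClass R] [NoZeroDivisors R] {w : m → R}
    {γ : n → R} : vecMulVec w γ = 0 ↔ w = 0 ∨ γ = 0 := by
  simp only [← ext_iff, vecMulVec_apply, zero_apply, mul_eq_zero, funext_iff, Pi.zero_apply,
    forall_or_left, forall_or_right]

variable {F m n : Type*} [Field F] [Fintype n]

theorem rank_eq_zero_iff {A : Matrix m n F} : A.rank = 0 ↔ A = 0 := by
  classical
  rw [rank, Submodule.finrank_eq_zero, LinearMap.range_eq_bot, ← toLin'_apply', map_eq_zero_iff _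
    toLin'.injective]

theorem rank_vecMulVec_eq_one {w : m → F} {γ : n → F} (hw : w ≠ 0) (hγ : γ ≠ 0) :
    (vecMulVec w γ).rank = 1 :=
  le_antisymm (rank_vecMulVec_le w γ) <| Nat.one_le_iff_ne_zero.mpr <|
    rank_eq_zero_iff.not.mpr <| vecMulVec_eq_zero_iff.not.mpr <| not_or.mpr ⟨hw, hγ⟩

theorem ne_vecMulVec_of_one_lt_rank {A : Matrix m n F} (hA : 1 < A.rank) (w : m → F)
    (γ : n → F) : A ≠ vecMulVec w γ := by
  rintro rfl
  exact (rank_vecMulVec_le w γ).not_gt hA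

theorem exists_eq_sum_vecMulVec_of_rank_eq [Fintype m] {A : Matrix m n F} {r : ℕ}
    (hA : A.rank = r) :
    ∃ (u : Fin r → m → F) (α : Fin r → n → F), A = ∑ k, vecMulVec (u k) (α k) := by
  rw [rank_eq_finrank_span_cols] at hA
  let b := Module.finBasisOfFinrankEq F _ hA
  have hcol (j : n) : Aᵀ j ∈ Submodule.span F (Set.range Aᵀ) := Submodule.subset_span ⟨j, rfl⟩
  refine ⟨fun k => b k, fun k j => b.repr ⟨Aᵀ j, hcol j⟩ k, ?_⟩
  ext i j
  have hsum := congr_fun (congr_arg Subtype.val (b.sum_repr ⟨Aᵀ j, hcol j⟩)) i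
  simp only [AddSubmonoidClass.coe_finsetSum, SetLike.val_smul, Finset.sum_apply,
    Pi.smul_apply, smul_eq_mul] at hsum
  rw [← transpose_apply A, ← hsum, Matrix.sum_apply]
  simp only [vecMulVec_apply, mul_comm]

theorem ne_zero_of_eq_vecMulVec_add {A : Matrix m n F} (hA : 1 < A.rank) {u v : m → F}
    {α β : n → F} (hsum : A = vecMulVec u α + vecMulVec v β) : u ≠ 0 ∧ α ≠ 0 := by
  constructor <;> rintro rfl <;>
    exact ne_vecMulVec_of_one_lt_rank hA v β
      (by rwa [vecMulVec_eq_zero_iff.mpr (by simp), zero_add] at hsum)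

theorem rank_eq_one_of_eq_vecMulVec_add {A : Matrix m n F} (hA : 1 < A.rank) {u v : m → F}
    {α β : n → F} (hsum : A = vecMulVec u α + vecMulVec v β) :
    (vecMulVec u α).rank = 1 ∧ (A - vecMulVec u α).rank = 1 := by
  obtain ⟨hu, hα⟩ := ne_zero_of_eq_vecMulVec_add hA hsum
  obtain ⟨hv, hβ⟩ := ne_zero_of_eq_vecMulVec_add hA (hsum.trans (add_comm _ _))
  rw [hsum, add_sub_cancel_left]
  exact ⟨rank_vecMulVec_eq_one hu hα, rank_vecMulVec_eq_one hv hβ⟩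

end Matrix

open Matrix

theorem three_rank_one_decompositions_general (F : Type*) [Field F]
    {n m : ℕ}
    (A : Matrix (Fin n) (Fin m) F) (hA : A.rank = 2) :
    ∃ M₁ M₂ M₃ : Matrix (Fin n) (Fin m) F,
      M₁ ≠ M₂ ∧ M₁ ≠ M₃ ∧ M₂ ≠ M₃ ∧
      M₁.rank = 1 ∧ (A - M₁).rank = 1 ∧
      M₂.rank = 1 ∧ (A - M₂).rank = 1 ∧
      M₃.rank = 1 ∧ (A - M₃).rank = 1 := by
  obtain ⟨u, α, hsum⟩ := exists_eq_sum_vecMulVec_of_rank_eq hA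
  rw [Fin.sum_univ_two] at hsum
  have hrank : 1 < A.rank := by omega
  have hsum₂ := hsum.trans (add_comm _ _)
  have hsum₃ : A = vecMulVec (u 0) (α 0 + α 1) + vecMulVec (u 1 - u 0) (α 1) := by
    rw [hsum, vecMulVec_add, sub_vecMulVec]; abel
  obtain ⟨hu₀, -⟩ := ne_zero_of_eq_vecMulVec_add hrank hsum
  obtain ⟨-, hα₁⟩ := ne_zero_of_eq_vecMulVec_add hrank hsum₂
  refine ⟨vecMulVec (u 0) (α 0), vecMulVec (u 1) (α 1), vecMulVec (u 0) (α 0 + α 1),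
    fun h => ?_, ?_, fun h => ?_, ?_⟩
  · exact ne_vecMulVec_of_one_lt_rank hrank (u 0) (α 0 + α 0) (by rw [hsum, ← h, vecMulVec_add])
  · rw [vecMulVec_add, ne_comm, add_ne_left]
    exact vecMulVec_eq_zero_iff.not.mpr (not_or.mpr ⟨hu₀, hα₁⟩)
  · exact ne_vecMulVec_of_one_lt_rank hrank (u 0) (α 0 + (α 0 + α 1))
      (by simp only [hsum, h, vecMulVec_add])
  · obtain ⟨h₁, h₁'⟩ := rank_eq_one_of_eq_vecMulVec_add hrank hsum
    obtain ⟨h₂, h₂'⟩ := rank_eq_one_of_eq_vecMulVec_add hrank hsum₂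
    obtain ⟨h₃, h₃'⟩ := rank_eq_one_of_eq_vecMulVec_add hrank hsum₃
    exact ⟨h₁, h₁', h₂, h₂', h₃, h₃'⟩

/-- For a rank-2 matrix `A` over a finite field with at least two rows, there are at least
three distinct rank-one matrices `M` with `rank (A - M) = 1`. -/
theorem three_rank_one_decompositions (F : Type*) [Field F] [Fintype F]
    {n m : ℕ} (hn : 2 ≤ n) (hm : 2 ≤ m)
    (A : Matrix (Fin n) (Fin m) F) (hA : A.rank = 2) :
    ∃ M₁ M₂ M₃ : Matrix (Fin n) (Fin m) F,
      M₁ ≠ M₂ ∧ M₁ ≠ M₃ ∧ M₂ ≠ M₃ ∧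
      M₁.rank = 1 ∧ (A - M₁).rank = 1 ∧
      M₂.rank = 1 ∧ (A - M₂).rank = 1 ∧
      M₃.rank = 1 ∧ (A - M₃).rank = 1 :=
  three_rank_one_decompositions_general F A hA
end

section
/- For integers q ≥ 2, m ≥ 2, t ≥ 2, and ε = (t−1) mod q, the inequality q^{m+t−1}·(q^m − 1 + (t−1)(q−1) + (−ε−1)(q−ε−1)) / ((q^m + (q−1)(t−1) + ε)(q^m + (q−1)(t−1) + ε − q)) ≤ q^{m+t−1}/(q^m + (t−1)(q−1)) holds; equivalently, ε(ε−q)(q^m + (q−1)(t−1) − 1) ≤ 0. -/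
/-- The Ratio-Type bound for `α₂` of `Γ(Mat((1,…,1),(m,1,…,1),F_q))` is never worse than the
Sphere-Packing bound: the corresponding real inequality holds, where `ε = (t-1) mod q`. -/
theorem ratio_type_le_sphere_packing (q m t ε : ℕ)
    (hq : 2 ≤ q) (hm : 2 ≤ m) (ht : 2 ≤ t) (hε : ε = (t - 1) % q) :
    (q : ℝ) ^ (m + t - 1) *
        (((q : ℝ) ^ m - 1 + ((t : ℝ) - 1) * ((q : ℝ) - 1) +
            (-(ε : ℝ) - 1) * ((q : ℝ) - (ε : ℝ) - 1)) /
          (((q : ℝ) ^ m + ((q : ℝ) - 1) * ((t : ℝ) - 1) + (ε : ℝ)) *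
            ((q : ℝ) ^ m + ((q : ℝ) - 1) * ((t : ℝ) - 1) + (ε : ℝ) - (q : ℝ)))) ≤
      (q : ℝ) ^ (m + t - 1) / ((q : ℝ) ^ m + ((t : ℝ) - 1) * ((q : ℝ) - 1)) := by
  have hq' : (2 : ℝ) ≤ (q : ℝ) := by exact_mod_cast hq
  have ht' : (2 : ℝ) ≤ (t : ℝ) := by exact_mod_cast ht
  have hεq : ε < q := hε ▸ Nat.mod_lt _ (by omega)
  have hε' : (ε : ℝ) + 1 ≤ (q : ℝ) := by exact_mod_cast hεq
  have hε0 : (0 : ℝ) ≤ (ε : ℝ) := Nat.cast_nonneg _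
  have hQ : (q : ℝ) ^ 2 ≤ (q : ℝ) ^ m := pow_le_pow_right₀ (by linarith) hm
  have hq2 : (4 : ℝ) ≤ (q : ℝ) ^ 2 := by nlinarith
  have hs : (1 : ℝ) ≤ ((q : ℝ) - 1) * ((t : ℝ) - 1) := by nlinarith
  have hD1 : (0 : ℝ) < (q : ℝ) ^ m + ((q : ℝ) - 1) * ((t : ℝ) - 1) + (ε : ℝ) := by nlinarith
  have hD2 : (0 : ℝ) < (q : ℝ) ^ m + ((q : ℝ) - 1) * ((t : ℝ) - 1) + (ε : ℝ) - (q : ℝ) := by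
    nlinarith
  have hQs : (0 : ℝ) < (q : ℝ) ^ m + ((t : ℝ) - 1) * ((q : ℝ) - 1) := by nlinarith
  rw [mul_div_assoc', div_le_div_iff₀ (by positivity) hQs]
  have hP : (0 : ℝ) ≤ (q : ℝ) ^ (m + t - 1) := by positivity
  have key : ((q : ℝ) ^ m - 1 + ((t : ℝ) - 1) * ((q : ℝ) - 1) +
      (-(ε : ℝ) - 1) * ((q : ℝ) - (ε : ℝ) - 1)) *
      ((q : ℝ) ^ m + ((t : ℝ) - 1) * ((q : ℝ) - 1)) ≤
      ((q : ℝ) ^ m + ((q : ℝ) - 1) * ((t : ℝ) - 1) + (ε : ℝ)) *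
        ((q : ℝ) ^ m + ((q : ℝ) - 1) * ((t : ℝ) - 1) + (ε : ℝ) - (q : ℝ)) := by
    nlinarith [mul_nonneg (mul_nonneg hε0 (by linarith : (0:ℝ) ≤ (q : ℝ) - (ε : ℝ)))
      (by nlinarith : (0:ℝ) ≤ (q : ℝ) ^ m + ((q : ℝ) - 1) * ((t : ℝ) - 1) - 1)]
  nlinarith [mul_le_mul_of_nonneg_left key hP]
end

section
/- For integers q ≥ 2, m ≥ 1, t ≥ 2, and any integer ε with 0 ≤ ε ≤ q−1, if t > q^m + 1 then F(t,q,m,ε) < 0, where F(t,q,m,ε) = −(q−1)²t² + (q−1)(q^{m+1} − 2q^m + 3q − 2ε − 2)t + (q−1)(q^m+1)(q^m − 2q + 1) + ε²(q^{m+1} − 1) − ε(q^{m+2} − 2q^{m+1} + 2q^m − 3q + 2). -/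
/-- The quadratic `F(t,q,m,ε)` from the MSRD non-existence argument is negative whenever
`t > q^m + 1`, for any `0 ≤ ε ≤ q - 1`. -/
theorem msrd_quadratic_neg (q m t ε : ℕ)
    (hq : 2 ≤ q) (hm : 1 ≤ m) (ht : 2 ≤ t) (hε : ε ≤ q - 1) (htq : q ^ m + 1 < t) :
    -((q : ℝ) - 1) ^ 2 * (t : ℝ) ^ 2 +
        ((q : ℝ) - 1) * ((q : ℝ) ^ (m + 1) - 2 * (q : ℝ) ^ m + 3 * (q : ℝ) - 2 * (ε : ℝ) - 2) *
          (t : ℝ) +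
        ((q : ℝ) - 1) * ((q : ℝ) ^ m + 1) * ((q : ℝ) ^ m - 2 * (q : ℝ) + 1) +
        (ε : ℝ) ^ 2 * ((q : ℝ) ^ (m + 1) - 1) -
        (ε : ℝ) * ((q : ℝ) ^ (m + 2) - 2 * (q : ℝ) ^ (m + 1) + 2 * (q : ℝ) ^ m -
          3 * (q : ℝ) + 2) < 0 := by
  set qr : ℝ := (q : ℝ) with hqr
  set Q : ℝ := (q : ℝ) ^ m with hQ
  have hq2 : (2 : ℝ) ≤ qr := by rw [hqr]; exact_mod_cast hq
  have hQq : qr ≤ Q := by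
    rw [hQ, hqr]
    calc (q : ℝ) = (q : ℝ) ^ 1 := (pow_one _).symm
    _ ≤ (q : ℝ) ^ m := pow_le_pow_right₀ (by exact_mod_cast hq.trans' one_le_two) hm
  have hε0 : (0 : ℝ) ≤ (ε : ℝ) := Nat.cast_nonneg ε
  have hεq : (ε : ℝ) ≤ qr - 1 := by
    rw [hqr]
    have : (ε : ℝ) ≤ ((q - 1 : ℕ) : ℝ) := by exact_mod_cast hε
    calc (ε : ℝ) ≤ ((q - 1 : ℕ) : ℝ) := this
    _ = (q : ℝ) - 1 := by
        have : (1 : ℕ) ≤ q := hq.trans' one_le_two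
        push_cast [Nat.cast_sub this]; ring
  have htQ : Q + 2 ≤ (t : ℝ) := by
    rw [hQ]
    have : (q ^ m + 2 : ℕ) ≤ t := htq
    exact_mod_cast this
  have hp1 : (q : ℝ) ^ (m + 1) = qr * Q := by rw [hQ, hqr]; ring
  have hp2 : (q : ℝ) ^ (m + 2) = qr ^ 2 * Q := by rw [hQ, hqr]; ring
  rw [hp1, hp2]
  have key : -(qr - 1) ^ 2 * (t : ℝ) ^ 2 +
      (qr - 1) * (qr * Q - 2 * Q + 3 * qr - 2 * (ε : ℝ) - 2) * (t : ℝ) +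
      (qr - 1) * (Q + 1) * (Q - 2 * qr + 1) +
      (ε : ℝ) ^ 2 * (qr * Q - 1) -
      (ε : ℝ) * (qr ^ 2 * Q - 2 * (qr * Q) + 2 * Q - 3 * qr + 2) =
      -(ε : ℝ) * (qr - (ε : ℝ)) * (qr * Q - 1)
        - (qr - 1) * (qr * (Q - 1) + 2 * (ε : ℝ)) * ((t : ℝ) - Q - 1)
        - (qr - 1) ^ 2 * ((t : ℝ) - Q - 1) ^ 2 := by ring
  rw [key]
  have h1 : (0 : ℝ) ≤ (ε : ℝ) * (qr - (ε : ℝ)) * (qr * Q - 1) := by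
    apply mul_nonneg (mul_nonneg hε0 (by linarith)); nlinarith
  have h2 : (0 : ℝ) < (qr - 1) * (qr * (Q - 1) + 2 * (ε : ℝ)) * ((t : ℝ) - Q - 1) := by
    apply mul_pos (mul_pos (by linarith) (by nlinarith)); linarith
  nlinarith [sq_nonneg (qr - 1), sq_nonneg ((t : ℝ) - Q - 1), mul_nonneg (sq_nonneg (qr - 1)) (sq_nonneg ((t : ℝ) - Q - 1))]
end

section
/- Let n = (1,…,1), m = (m,1,…,1) (t blocks), with m ≥ 2, q a prime power, and t > q^m + 1. Then there is no sum-rank-metric code C ⊆ Mat(n,m,F_q) with minimum sum-rank distance 3 and |C| = q^{t−2}; i.e., no MSRD code with d = 3 exists for these parameters. -/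
/-!
A row matrix has rank `0` or `1`, so the sum-rank distance on
`Mat((1,…,1),(M,1,…,1),F)` is the Hamming distance over the mixed alphabet `F^M × F^(t-1)`.
Delete the coordinate `i₀` (alphabet `F^M`) and one further coordinate `j₁`: since `d = 3`, the
projection of `C` onto the remaining `t - 2` coordinates is injective, hence bijective. Fix
`X₀ ∈ C` and `v ≠ X₀ j₁`. For each remaining coordinate `j`, the `q` codewords that agree with `X₀`
on the other remaining coordinates have pairwise distinct `j₁`-entries, so one of them, `Y j`, has
`j₁`-entry `v`. Distance `3` then forces `X₀` and the `Y j` to have pairwise distinct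
`i₀`-entries, whence `t - 1 ≤ q^M`.
-/

private lemma rank_neg' {F : Type*} [Field F] {a b : ℕ} (A : Matrix (Fin a) (Fin b) F) :
    (-A).rank = A.rank := by
  have h : LinearMap.range (-A).mulVecLin = LinearMap.range A.mulVecLin := by
    ext x
    simp only [LinearMap.mem_range, Matrix.mulVecLin_apply, Matrix.neg_mulVec]
    constructor
    · rintro ⟨v, hv⟩; exact ⟨-v, by simp [Matrix.mulVec_neg, hv]⟩
    · rintro ⟨v, hv⟩; exact ⟨-v, by simp [Matrix.mulVec_neg, hv]⟩
  rw [Matrix.rank, Matrix.rank, h]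

/-- The sum-rank of a tuple of matrices. -/
noncomputable def srk {F : Type*} [Field F] {t : ℕ} {n m : Fin t → ℕ}
    (X : ∀ i, Matrix (Fin (n i)) (Fin (m i)) F) : ℕ :=
  ∑ i, (X i).rank

/-- The sum-rank-metric graph. -/
def srGraph (F : Type*) [Field F] {t : ℕ} (n m : Fin t → ℕ) :
    SimpleGraph (∀ i : Fin t, Matrix (Fin (n i)) (Fin (m i)) F) where
  Adj X Y := srk (fun i => X i - Y i) = 1
  symm := by
    constructor
    intro X Y h
    unfold srk at h ⊢
    calc ∑ i, (Y i - X i).rank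
        = ∑ i, (X i - Y i).rank := by
          refine Finset.sum_congr rfl fun i _ => ?_
          rw [show Y i - X i = -(X i - Y i) by abel, rank_neg']
      _ = 1 := h
  loopless := by
    constructor
    intro X h
    unfold srk at h
    simp at h

open Finset Function

theorem Matrix.rank_eq_zero_iff_s18 {m n K : Type*} [Fintype n] [Field K] {A : Matrix m n K} :
    A.rank = 0 ↔ A = 0 := by
  classical
  rw [Matrix.rank, Submodule.finrank_eq_zero, LinearMap.range_eq_bot, ← Matrix.toLin'_apply',
    map_eq_zero_iff _ Matrix.toLin'.injective]

theorem Matrix.card_eq_card_pow {m n α : Type*} [Fintype m] [Fintype n] [Fintype α]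
    [DecidableEq m] [DecidableEq n] :
    Fintype.card (Matrix m n α) = Fintype.card α ^ (Fintype.card m * Fintype.card n) := by
  rw [Fintype.card_congr Matrix.of.symm]
  simp [pow_mul']

theorem srk_sub_eq_hammingDist {F : Type*} [Field F] [DecidableEq F] {t : ℕ} {m : Fin t → ℕ}
    (X Y : ∀ i, Matrix (Fin 1) (Fin (m i)) F) :
    srk (fun i => X i - Y i) = hammingDist X Y := by
  rw [srk, hammingDist, card_filter]
  refine sum_congr rfl fun i _ => ?_
  by_cases h : X i = Y i
  · simp [h]
  · have hle : (X i - Y i).rank ≤ 1 := by simpa using (X i - Y i).rank_le_height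
    have hne : (X i - Y i).rank ≠ 0 := by rwa [Ne, Matrix.rank_eq_zero_iff_s18, sub_eq_zero]
    rw [if_pos h]
    omega

theorem card_pi_compl_eq_pow {ι : Type*} [Fintype ι] [DecidableEq ι] {β : ι → Type*}
    [∀ i, Fintype (β i)] {s : Finset ι} {q : ℕ} (hβ : ∀ i ∉ s, Fintype.card (β i) = q) :
    Fintype.card (∀ i : {i // i ∉ s}, β i) = q ^ (Fintype.card ι - s.card) := by
  rw [Fintype.card_pi, prod_congr rfl fun i _ => hβ i.1 i.2, prod_const, card_univ]
  simp

section Hamming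

variable {ι : Type*} [Fintype ι] {β : ι → Type*} [∀ i, DecidableEq (β i)]
  {C : Finset (∀ i, β i)} {d : ℕ} {s : Finset ι} {x y : ∀ i, β i}

theorem filter_ne_subset_of_eqOn_compl (h : ∀ i ∉ s, x i = y i) :
    ({i | x i ≠ y i} : Finset ι) ⊆ s :=
  fun i hi => by_contra fun his => (mem_filter.mp hi).2 (h i his)

theorem hammingDist_le_card_of_eqOn_compl (h : ∀ i ∉ s, x i = y i) :
    hammingDist x y ≤ s.card :=
  card_le_card (filter_ne_subset_of_eqOn_compl h)

theorem eq_of_eqOn_compl_of_card_lt (hC : ∀ x ∈ C, ∀ y ∈ C, x ≠ y → d ≤ hammingDist x y)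
    (hx : x ∈ C) (hy : y ∈ C) (h : ∀ i ∉ s, x i = y i) (hs : s.card < d) : x = y := by
  by_contra hne
  have := hC x hx y hy hne
  have := hammingDist_le_card_of_eqOn_compl h
  omega

theorem ne_of_eqOn_compl_of_card_le (hC : ∀ x ∈ C, ∀ y ∈ C, x ≠ y → d ≤ hammingDist x y)
    (hx : x ∈ C) (hy : y ∈ C) (hne : x ≠ y) (h : ∀ i ∉ s, x i = y i) (hs : s.card ≤ d) :
    ∀ i ∈ s, x i ≠ y i := by
  have heq : ({i | x i ≠ y i} : Finset ι) = s :=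
    eq_of_subset_of_card_le (filter_ne_subset_of_eqOn_compl h) (hs.trans (hC x hx y hy hne))
  intro i hi
  rw [← heq] at hi
  exact (mem_filter.mp hi).2

variable [DecidableEq ι] [∀ i, Fintype (β i)]

theorem exists_mem_eqOn_compl (hC : ∀ x ∈ C, ∀ y ∈ C, x ≠ y → d ≤ hammingDist x y)
    (hs : s.card < d) (hcard : Fintype.card (∀ i : {i // i ∉ s}, β i) ≤ C.card)
    (w : ∀ i : {i // i ∉ s}, β i) : ∃ x ∈ C, ∀ i (hi : i ∉ s), x i = w ⟨i, hi⟩ := by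
  obtain ⟨x, hx, hxw⟩ := surj_on_of_inj_on_of_card_le (s := C) (t := univ)
    (fun x _ (i : {i // i ∉ s}) => x i.1)
    (fun _ _ => mem_univ _)
    (fun _ _ hx hy hxy =>
      eq_of_eqOn_compl_of_card_lt hC hx hy (fun i hi => congrFun hxy ⟨i, hi⟩) hs)
    hcard w (mem_univ w)
  exact ⟨x, hx, fun i hi => (congrFun hxw ⟨i, hi⟩).symm⟩

theorem exists_mem_apply_eq_of_eqOn_compl
    (hC : ∀ x ∈ C, ∀ y ∈ C, x ≠ y → d ≤ hammingDist x y)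
    (hs : s.card < d) (hcard : Fintype.card (∀ i : {i // i ∉ s}, β i) ≤ C.card)
    {j k : ι} (hj : j ∉ s) (hk : k ∈ s) (hjk : Fintype.card (β j) = Fintype.card (β k))
    (x : ∀ i, β i) (v : β k) : ∃ y ∈ C, y k = v ∧ ∀ i ∉ s, i ≠ j → y i = x i := by
  choose y hyC hyx using fun b : β j =>
    exists_mem_eqOn_compl hC hs hcard fun i : {i // i ∉ s} => update x j b i
  have hinj : Injective fun b => y b k := by
    intro b b' hbb'
    have hsmall : (insert j (s.erase k)).card < d := by
      have := card_insert_le j (s.erase k)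
      have := card_erase_of_mem hk
      have := card_pos.mpr ⟨k, hk⟩
      omega
    have hyy : y b = y b' := by
      refine eq_of_eqOn_compl_of_card_lt hC (hyC b) (hyC b') (fun i hi => ?_) hsmall
      simp only [mem_insert, mem_erase, not_or, not_and_or, not_not] at hi
      obtain ⟨hij, rfl | his⟩ := hi
      · exact hbb'
      · simp [hyx _ i his, hij]
    simpa [hyx _ j hj] using congrFun hyy j
  obtain ⟨b, hb⟩ := ((Fintype.bijective_iff_injective_and_card _).mpr ⟨hinj, hjk⟩).2 v
  exact ⟨y b, hyC b, hb, fun i hi hij => by rw [hyx b i hi, update_of_ne hij]⟩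

theorem card_le_card_add_one_of_three_le_hammingDist (i₀ : ι) {q : ℕ} (hq : 1 < q)
    (hβ : ∀ i ≠ i₀, Fintype.card (β i) = q) (hcard : C.card = q ^ (Fintype.card ι - 2))
    (hC : ∀ x ∈ C, ∀ y ∈ C, x ≠ y → 3 ≤ hammingDist x y) :
    Fintype.card ι ≤ Fintype.card (β i₀) + 1 := by
  rcases le_or_gt (Fintype.card ι) 1 with hι | hι
  · omega
  obtain ⟨j₁, hj₁⟩ := Fintype.exists_ne_of_one_lt_card hι i₀
  set s : Finset ι := {i₀, j₁}
  have hs : s.card = 2 := card_pair hj₁.symm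
  have hmem : ∀ i ∉ s, i ≠ i₀ ∧ i ≠ j₁ := by simp [s]
  have hrestrict : Fintype.card (∀ i : {i // i ∉ s}, β i) ≤ C.card := by
    rw [card_pi_compl_eq_pow fun i hi => hβ i (hmem i hi).1, hs, hcard]
  obtain ⟨X₀, hX₀⟩ : C.Nonempty := card_pos.mp (by rw [hcard]; exact pow_pos (by omega) _)
  obtain ⟨v, hv⟩ := Fintype.exists_ne_of_one_lt_card (hβ j₁ hj₁ ▸ hq) (X₀ j₁)
  have hY (j : {j // j ∉ s}) : ∃ Y ∈ C, Y j₁ = v ∧ ∀ i ∉ s, i ≠ j → Y i = X₀ i :=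
    exists_mem_apply_eq_of_eqOn_compl hC (by omega) hrestrict j.2 (by simp [s])
      (by rw [hβ j (hmem j j.2).1, hβ j₁ hj₁]) X₀ v
  choose Y hYC hYv hYX using hY
  have hY_ne_X₀ (j : {j // j ∉ s}) : Y j i₀ ≠ X₀ i₀ ∧ Y j j ≠ X₀ j := by
    have hne := ne_of_eqOn_compl_of_card_le (s := {i₀, j₁, j.1}) hC (hYC j) hX₀
      (fun h => hv (by rw [← hYv j, h]))
      (fun i hi => hYX j i (by simp_all [s]) (by simp_all)) card_le_three
    exact ⟨hne i₀ (by simp), hne j (by simp)⟩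
  have hY_ne_Y (j k : {j // j ∉ s}) (hjk : j ≠ k) : Y j i₀ ≠ Y k i₀ := by
    have hne : Y j ≠ Y k := fun h =>
      (hY_ne_X₀ j).2 (by rw [h, hYX k j j.2 (Subtype.coe_ne_coe.mpr hjk)])
    refine ne_of_eqOn_compl_of_card_le (s := {i₀, j.1, k.1}) hC (hYC j) (hYC k) hne
      (fun i hi => ?_) card_le_three i₀ (by simp)
    by_cases hij₁ : i = j₁
    · rw [hij₁, hYv j, hYv k]
    · simp only [mem_insert, mem_singleton, not_or] at hi
      have his : i ∉ s := by simp [s, hi.1, hij₁]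
      rw [hYX j i his hi.2.1, hYX k i his hi.2.2]
  let f : Option {j // j ∉ s} → β i₀ := fun o => o.elim (X₀ i₀) fun j => Y j i₀
  have hf : Injective f := by
    rintro (_ | j) (_ | k) h
    · rfl
    · exact absurd h.symm (hY_ne_X₀ k).1
    · exact absurd h (hY_ne_X₀ j).1
    · by_contra hjk
      exact hY_ne_Y j k (fun h' => hjk (by rw [h'])) h
  have := Fintype.card_le_of_injective f hf
  simp only [Fintype.card_option, Fintype.card_subtype_compl, Fintype.card_coe, hs] at this
  omega

end Hamming

theorem no_msrd_d3_general (F : Type*) [Field F] [Fintype F]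
    (t M : ℕ) (m : Fin t → ℕ) (i₀ : Fin t)
    (hm₀ : m i₀ = M) (hm₁ : ∀ i : Fin t, i ≠ i₀ → m i = 1)
    (htq : Fintype.card F ^ M + 1 < t) :
    ¬ ∃ C : Finset (∀ i : Fin t, Matrix (Fin 1) (Fin (m i)) F),
        C.card = Fintype.card F ^ (t - 2) ∧
        ∀ X ∈ C, ∀ Y ∈ C, X ≠ Y → 3 ≤ srk (fun i => X i - Y i) := by
  classical
  rintro ⟨C, hcard, hdist⟩
  have hlen := card_le_card_add_one_of_three_le_hammingDist (C := C) (q := Fintype.card F) i₀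
    Fintype.one_lt_card
    (fun i hi => by simp [Matrix.card_eq_card_pow, hm₁ i hi]) (by rwa [Fintype.card_fin])
    fun X hX Y hY hXY => srk_sub_eq_hammingDist X Y ▸ hdist X hX Y hY hXY
  simp only [Fintype.card_fin, Matrix.card_eq_card_pow, one_mul, hm₀] at hlen
  omega

/-- Non-existence of MSRD codes with minimum distance 3 in
$\mathrm{Mat}((1,\dots,1),(M,1,\dots,1),\mathbb{F}_q)$ when $t > q^M + 1$:
no code of cardinality $q^{t-2}$ with pairwise sum-rank distance at least 3 exists. -/
theorem no_msrd_d3 (F : Type*) [Field F] [Fintype F]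
    (t M : ℕ) (ht : 2 ≤ t) (hM : 2 ≤ M) (m : Fin t → ℕ) (i₀ : Fin t)
    (hm₀ : m i₀ = M) (hm₁ : ∀ i : Fin t, i ≠ i₀ → m i = 1)
    (htq : Fintype.card F ^ M + 1 < t) :
    ¬ ∃ C : Finset (∀ i : Fin t, Matrix (Fin 1) (Fin (m i)) F),
        C.card = Fintype.card F ^ (t - 2) ∧
        ∀ X ∈ C, ∀ Y ∈ C, X ≠ Y → 3 ≤ srk (fun i => X i - Y i) :=
  no_msrd_d3_general F t M m i₀ hm₀ hm₁ htq
end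

section
/- For n ≥ 1, m ≥ n, and q a prime power, the bilinear forms graph Γ(Mat(n,m,F_q)) (vertices: n×m matrices over F_q, adjacency: rank of difference equals 1) is distance-transitive: for any two pairs of matrices (V,W) and (X,Y) with rank(V−W) = rank(X−Y), there is a graph automorphism mapping V to X and W to Y. -/
/-- The bilinear forms graph: vertices are `n × m` matrices over `F`, two matrices being
adjacent when their difference has rank one. -/
def bfGraph (F : Type*) [Field F] (n m : ℕ) : SimpleGraph (Matrix (Fin n) (Fin m) F) where
  Adj A B := (A - B).rank = 1
  symm := by
    constructor
    intro A B h
    rw [show B - A = -(A - B) by abel, rank_neg', h]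
  loopless := by
    constructor
    intro A h
    simp at h

/-!
The maps `Z ↦ P * Z * Q + C` with `P`, `Q` invertible multiply every difference on both sides by
invertible matrices, so they preserve the rank of differences and are automorphisms of the
bilinear forms graph. Matrices of equal rank are equivalent, so there are `P`, `Q` with
`P * (V - W) * Q = X - Y`; the translation `C = X - P * V * Q` then sends `V` to `X` and `W` to `Y`.
-/

open Module

namespace LinearMap

variable {K V W : Type*} [Field K] [AddCommGroup V] [Module K V] [AddCommGroup W] [Module K W]

theorem exists_linearEquiv_comp_eq_of_ker_eq [FiniteDimensional K W] {f g : V →ₗ[K] W}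
    (h : ker f = ker g) : ∃ e : W ≃ₗ[K] W, e.toLinearMap ∘ₗ f = g := by
  let σ : range f ≃ₗ[K] range g :=
    f.quotKerEquivRange.symm ≪≫ₗ Submodule.quotEquivOfEq _ _ h ≪≫ₗ g.quotKerEquivRange
  obtain ⟨e, he⟩ := Submodule.exists_linearEquiv_restrict_eq σ
  exact ⟨e, LinearMap.ext fun x => by simpa [σ] using (he ⟨f x, mem_range_self f x⟩).symm⟩

/- First match the kernels by an automorphism of the source; the induced isomorphism between
the ranges then extends to an automorphism of the target. -/
theorem exists_linearEquiv_comp_comp_eq_of_finrank_range_eq [FiniteDimensional K V]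
    [FiniteDimensional K W] {f g : V →ₗ[K] W} (h : finrank K (range f) = finrank K (range g)) :
    ∃ (e₁ : V ≃ₗ[K] V) (e₂ : W ≃ₗ[K] W), e₂.toLinearMap ∘ₗ f ∘ₗ e₁.toLinearMap = g := by
  have hker : finrank K (ker g) = finrank K (ker f) := by
    have := f.finrank_range_add_finrank_ker
    have := g.finrank_range_add_finrank_ker
    omega
  set κ := LinearEquiv.ofFinrankEq _ _ hker
  obtain ⟨e₁, he₁⟩ := Submodule.exists_linearEquiv_restrict_eq κ
  have hmap : (ker g).map e₁.toLinearMap = ker f := by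
    ext y
    constructor
    · rintro ⟨x, hx, rfl⟩
      rw [LinearEquiv.coe_coe, ← he₁ ⟨x, hx⟩]
      exact (κ ⟨x, hx⟩).2
    · intro hy
      exact ⟨_, (κ.symm ⟨y, hy⟩).2, by simp [← he₁]⟩
  have hker_comp : ker (f ∘ₗ e₁.toLinearMap) = ker g := by
    rw [ker_comp, ← hmap, Submodule.comap_map_eq_of_injective e₁.injective]
  obtain ⟨e₂, he₂⟩ := exists_linearEquiv_comp_eq_of_ker_eq hker_comp
  exact ⟨e₁, e₂, he₂⟩

end LinearMap

namespace Matrix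

variable {m n : Type*} [Fintype m] [Fintype n] [DecidableEq m] [DecidableEq n]

theorem rank_units_mul_mul {R : Type*} [CommRing R] (P : GL m R) (A : Matrix m n R) (Q : GL n R) :
    ((P : Matrix m m R) * A * (Q : Matrix n n R)).rank = A.rank := by
  rw [rank_mul_eq_left_of_isUnit_det _ _ (isUnits_det_units Q),
    rank_mul_eq_right_of_isUnit_det _ _ (isUnits_det_units P)]

theorem exists_units_mul_mul_eq_of_rank_eq {K : Type*} [Field K] {A B : Matrix m n K} (h : A.rank = B.rank) :
    ∃ (P : GL m K) (Q : GL n K), (P : Matrix m m K) * A * (Q : Matrix n n K) = B := by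
  obtain ⟨e₁, e₂, he⟩ :=
    LinearMap.exists_linearEquiv_comp_comp_eq_of_finrank_range_eq (f := A.mulVecLin) h
  refine ⟨GeneralLinearGroup.toLin.symm (LinearMap.GeneralLinearGroup.ofLinearEquiv e₂),
    GeneralLinearGroup.toLin.symm (LinearMap.GeneralLinearGroup.ofLinearEquiv e₁), ?_⟩
  have := congrArg LinearMap.toMatrix' he
  rw [LinearMap.toMatrix'_comp, LinearMap.toMatrix'_comp, ← toLin'_apply' B,
    LinearMap.toMatrix'_toLin', ← toLin'_apply' A, LinearMap.toMatrix'_toLin'] at this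
  rw [← this, Matrix.mul_assoc]
  rfl

end Matrix

namespace bfGraph

variable {F : Type*} [Field F] {n m : ℕ}

def affineIso (P : GL (Fin n) F) (Q : GL (Fin m) F) (C : Matrix (Fin n) (Fin m) F) :
    bfGraph F n m ≃g bfGraph F n m where
  toFun Z := (P : Matrix (Fin n) (Fin n) F) * Z * (Q : Matrix (Fin m) (Fin m) F) + C
  invFun Z :=
    ((P⁻¹ : GL (Fin n) F) : Matrix (Fin n) (Fin n) F) * (Z - C) *
      ((Q⁻¹ : GL (Fin m) F) : Matrix (Fin m) (Fin m) F)
  left_inv Z := by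
    simp only [add_sub_cancel_right, Matrix.mul_assoc, Units.mul_inv, Matrix.mul_one,
      ← Matrix.mul_assoc _ (P : Matrix (Fin n) (Fin n) F), Units.inv_mul, Matrix.one_mul]
  right_inv Z := by
    simp only [Matrix.mul_assoc, Units.inv_mul, Matrix.mul_one,
      ← Matrix.mul_assoc (P : Matrix (Fin n) (Fin n) F), Units.mul_inv, Matrix.one_mul,
      sub_add_cancel]
  map_rel_iff' {A B} := by
    dsimp only [bfGraph, Equiv.coe_fn_mk]
    rw [add_sub_add_right_eq_sub, ← Matrix.sub_mul, ← Matrix.mul_sub, Matrix.rank_units_mul_mul]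

@[simp]
theorem affineIso_apply (P : GL (Fin n) F) (Q : GL (Fin m) F) (C Z : Matrix (Fin n) (Fin m) F) :
    affineIso P Q C Z = (P : Matrix (Fin n) (Fin n) F) * Z * (Q : Matrix (Fin m) (Fin m) F) + C :=
  rfl

end bfGraph

theorem bfGraph_distanceTransitive_general (F : Type*) [Field F]
    (n m : ℕ)
    (V W X Y : Matrix (Fin n) (Fin m) F) (h : (V - W).rank = (X - Y).rank) :
    ∃ φ : bfGraph F n m ≃g bfGraph F n m, φ V = X ∧ φ W = Y := by
  obtain ⟨P, Q, hPQ⟩ := Matrix.exists_units_mul_mul_eq_of_rank_eq h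
  refine ⟨bfGraph.affineIso P Q
    (X - (P : Matrix (Fin n) (Fin n) F) * V * (Q : Matrix (Fin m) (Fin m) F)), by simp, ?_⟩
  rw [bfGraph.affineIso_apply, ← sub_sub_cancel X Y, ← hPQ, Matrix.mul_sub, Matrix.sub_mul]
  abel

/-- The bilinear forms graph is distance-transitive: any pair of matrices at a given rank
distance can be mapped to any other pair at the same rank distance by a graph automorphism. -/
theorem bfGraph_distanceTransitive (F : Type*) [Field F] [Fintype F]
    (n m : ℕ) (hn : 1 ≤ n) (hnm : n ≤ m)
    (V W X Y : Matrix (Fin n) (Fin m) F) (h : (V - W).rank = (X - Y).rank) :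
    ∃ φ : bfGraph F n m ≃g bfGraph F n m, φ V = X ∧ φ W = Y :=
  bfGraph_distanceTransitive_general F n m V W X Y h
end
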